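/- arXiv:0904.3783 — 2 statements merged into one kernel-verified Lean document; each statement's English description precedes it below -/
import Mathlib

section
/- Let V = C([0,1]) and P(t) = [[1, e^{2πit}],[e^{-2πit}, 1]]. Then for every r > 0, r·e_2 + P ∈ D_2^max(V). Consequently the order unit e = 1 is not an Archimedean matrix order unit for the matrix ordering D^max(V). -/
open scoped ComplexOrder
open Finset

noncomputable section

section Defs
variable {V : Type*} [AddCommGroup V] [Module ℂ V]

/-- The elementary tensor `a ⊗ v` in `M_n(V) ≅ M_n(ℂ) ⊗ V`. -/
def eTensor {n : ℕ} (a : Matrix (Fin n) (Fin n) ℂ) (v : V) : Matrix (Fin n) (Fin n) V :=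
  Matrix.of fun p q => a p q • v

/-- The conjugation `X* A X` of `A ∈ M_n(V)` by a scalar matrix `X ∈ M_{n,m}(ℂ)`. -/
def mconj {n m : ℕ} (X : Matrix (Fin n) (Fin m) ℂ) (A : Matrix (Fin n) (Fin n) V) :
    Matrix (Fin m) (Fin m) V :=
  Matrix.of fun i j => ∑ k, ∑ l, (star (X k i) * X l j) • A k l

/-- The diagonal matrix `e_n` with `e` in each diagonal entry. -/
def eMat (e : V) (n : ℕ) : Matrix (Fin n) (Fin n) V :=
  Matrix.of fun i j => if i = j then e else 0

/-- The minimal cone `C_n^min(V)`. -/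
def Cmin (pos : Set V) (n : ℕ) : Set (Matrix (Fin n) (Fin n) V) :=
  {M | ∀ lam : Fin n → ℂ, (∑ i, ∑ j, (star (lam i) * lam j) • M i j) ∈ pos}

/-- The cone `D_n^max(V)` of sums of tensors `a ⊗ v` with `a ∈ M_n⁺`, `v ∈ V⁺`. -/
def Dmax (pos : Set V) (n : ℕ) : Set (Matrix (Fin n) (Fin n) V) :=
  {M | ∃ (k : ℕ) (a : Fin k → Matrix (Fin n) (Fin n) ℂ) (v : Fin k → V),
    (∀ i, (a i).PosSemidef) ∧ (∀ i, v i ∈ pos) ∧ M = ∑ i, eTensor (a i) (v i)}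

/-- The maximal cone `C_n^max(V)`: the Archimedeanization of `D_n^max(V)`. -/
def Cmax (pos : Set V) (e : V) (n : ℕ) : Set (Matrix (Fin n) (Fin n) V) :=
  {M | ∀ r : ℝ, 0 < r → (r : ℂ) • eMat e n + M ∈ Dmax pos n}

end Defs

section StarDefs
variable {V : Type*} [AddCommGroup V] [Module ℂ V] [StarAddMonoid V] [StarModule ℂ V]

/-- `(V, pos)` is an ordered `*`-vector space. -/
def IsOrderedStar (pos : Set V) : Prop :=
  (∀ v ∈ pos, star v = v) ∧
  (∀ r : ℝ, 0 ≤ r → ∀ v ∈ pos, (r : ℂ) • v ∈ pos) ∧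
  (∀ v ∈ pos, ∀ w ∈ pos, v + w ∈ pos) ∧
  (∀ v ∈ pos, -v ∈ pos → v = 0)

/-- `(V, pos, e)` is an Archimedean order unit (AOU) space. -/
def IsAOU (pos : Set V) (e : V) : Prop :=
  IsOrderedStar pos ∧ star e = e ∧
  (∀ v : V, star v = v → ∃ r : ℝ, 0 < r ∧ (r : ℂ) • e - v ∈ pos) ∧
  (∀ v : V, (∀ r : ℝ, 0 < r → (r : ℂ) • e + v ∈ pos) → v ∈ pos)

/-- A state on `(V, pos, e)`: a unital positive linear functional. -/
def IsState (pos : Set V) (e : V) (s : V →ₗ[ℂ] ℂ) : Prop :=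
  s e = 1 ∧ ∀ v ∈ pos, 0 ≤ s v

/-- A positive linear functional. -/
def IsPosFunc (pos : Set V) (f : V →ₗ[ℂ] ℂ) : Prop := ∀ v ∈ pos, 0 ≤ f v

/-- A matrix ordering on the `*`-vector space `V`. -/
def IsMatrixOrdering (C : ∀ n : ℕ, Set (Matrix (Fin n) (Fin n) V)) : Prop :=
  (∀ (n : ℕ) (M : Matrix (Fin n) (Fin n) V), M ∈ C n → star M = M) ∧
  (∀ (n : ℕ) (r : ℝ), 0 ≤ r → ∀ M ∈ C n, (r : ℂ) • M ∈ C n) ∧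
  (∀ n : ℕ, ∀ M ∈ C n, ∀ N ∈ C n, M + N ∈ C n) ∧
  (∀ n : ℕ, ∀ M ∈ C n, -M ∈ C n → M = 0) ∧
  (∀ (n m : ℕ) (X : Matrix (Fin n) (Fin m) ℂ), ∀ M ∈ C n, mconj X M ∈ C m)

/-- `e` is a matrix order unit for the family `C`. -/
def IsMatrixOrderUnit (C : ∀ n : ℕ, Set (Matrix (Fin n) (Fin n) V)) (e : V) : Prop :=
  star e = e ∧
  ∀ (n : ℕ) (M : Matrix (Fin n) (Fin n) V), star M = M →
    ∃ r : ℝ, 0 < r ∧ (r : ℂ) • eMat e n - M ∈ C n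

/-- `e` is an Archimedean matrix order unit for the family `C`. -/
def IsArchMatrixOrderUnit (C : ∀ n : ℕ, Set (Matrix (Fin n) (Fin n) V)) (e : V) : Prop :=
  IsMatrixOrderUnit C e ∧
  ∀ (n : ℕ) (M : Matrix (Fin n) (Fin n) V),
    (∀ r : ℝ, 0 < r → (r : ℂ) • eMat e n + M ∈ C n) → M ∈ C n

/-- `(V, C, e)` is an (abstract) operator system. -/
def IsOperatorSystem (C : ∀ n : ℕ, Set (Matrix (Fin n) (Fin n) V)) (e : V) : Prop :=
  IsMatrixOrdering C ∧ IsArchMatrixOrderUnit C e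

/-- The ground-level cone of a matrix ordering, under `M_1(V) ≅ V`. -/
def groundPos (C : ∀ n : ℕ, Set (Matrix (Fin n) (Fin n) V)) : Set V :=
  {v | (Matrix.of fun _ _ : Fin 1 => v) ∈ C 1}

/-- An operator system structure on the AOU space `(V, pos, e)`. -/
def IsOpSysStructure (pos : Set V) (e : V) (C : ∀ n : ℕ, Set (Matrix (Fin n) (Fin n) V)) :
    Prop :=
  IsOperatorSystem C e ∧ C 1 = {M | M 0 0 ∈ pos}

end StarDefs

section DualDefs
variable {V : Type*} [AddCommGroup V] [Module ℂ V] [StarAddMonoid V] [StarModule ℂ V]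

/-- The adjoint functional `f*` with `f*(v) = conj (f (v*))`. -/
def starFunc (f : V →ₗ[ℂ] ℂ) : V →ₗ[ℂ] ℂ where
  toFun v := star (f (star v))
  map_add' v w := by simp
  map_smul' c v := by simp [star_smul, map_smul, mul_comm]

/-- The pairing between a matrix of functionals and a matrix over `V`:
`(f_{ij})((v_{ij})) = ∑_{ij} f_{ij}(v_{ij})`. -/
def dPair {n : ℕ} (F : Matrix (Fin n) (Fin n) (V →ₗ[ℂ] ℂ))
    (A : Matrix (Fin n) (Fin n) V) : ℂ :=
  ∑ i, ∑ j, F i j (A i j)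

/-- The dual cones `P_n^d` of a matrix ordering on `V`. -/
def dualCones (P : ∀ n : ℕ, Set (Matrix (Fin n) (Fin n) V)) (n : ℕ) :
    Set (Matrix (Fin n) (Fin n) (V →ₗ[ℂ] ℂ)) :=
  {F | ∀ A ∈ P n, 0 ≤ dPair F A}

/-- The predual cones `^dQ_n` of a matrix ordering on `V'`. -/
def preCones (Q : ∀ n : ℕ, Set (Matrix (Fin n) (Fin n) (V →ₗ[ℂ] ℂ))) (n : ℕ) :
    Set (Matrix (Fin n) (Fin n) V) :=
  {A | ∀ F ∈ Q n, 0 ≤ dPair F A}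

/-- A matrix ordering on the dual space `V'` (hermitian via `starFunc`,
compatibility under conjugation by scalar matrices). -/
def IsDualMatrixOrdering (Q : ∀ n : ℕ, Set (Matrix (Fin n) (Fin n) (V →ₗ[ℂ] ℂ))) : Prop :=
  (∀ (n : ℕ) (F : Matrix (Fin n) (Fin n) (V →ₗ[ℂ] ℂ)), F ∈ Q n →
    ∀ i j, F i j = starFunc (F j i)) ∧
  (∀ (n : ℕ) (r : ℝ), 0 ≤ r → ∀ F ∈ Q n, (r : ℂ) • F ∈ Q n) ∧
  (∀ n : ℕ, ∀ F ∈ Q n, ∀ G ∈ Q n, F + G ∈ Q n) ∧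
  (∀ n : ℕ, ∀ F ∈ Q n, -F ∈ Q n → F = 0) ∧
  (∀ (n m : ℕ) (X : Matrix (Fin n) (Fin m) ℂ), ∀ F ∈ Q n, mconj X F ∈ Q m)

/-- Weak*-closedness of a set of matrices of functionals: closedness in the topology
induced by the pairing against all of `M_n(V)`, with the topology of pointwise convergence. -/
def WeakStarClosed {n : ℕ} (Q : Set (Matrix (Fin n) (Fin n) (V →ₗ[ℂ] ℂ))) : Prop :=
  @IsClosed _ (TopologicalSpace.induced
    (fun F : Matrix (Fin n) (Fin n) (V →ₗ[ℂ] ℂ) => fun A => dPair F A)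
    Pi.topologicalSpace) Q

/-- The minimal norm on an AOU space: `‖v‖_m = sup { |s(v)| : s a state }`. -/
def minNorm (pos : Set V) (e : V) (v : V) : ℝ :=
  ⨆ s : {s : V →ₗ[ℂ] ℂ // IsState pos e s}, ‖s.1 v‖

/-- Bounded (continuous) linear functionals on `V`. -/
def IsBddFunc (pos : Set V) (e : V) (f : V →ₗ[ℂ] ℂ) : Prop :=
  ∃ c : ℝ, ∀ v, ‖f v‖ ≤ c * minNorm pos e v

end DualDefs

end

/-- The positive cone of `C([0,1])`. -/
def posC01 : Set C(Set.Icc (0:ℝ) 1, ℂ) := {f | ∀ t, 0 ≤ f t}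

/-- The function `t ↦ e^{2πit}` in `C([0,1])`. -/
noncomputable def expMap : C(Set.Icc (0:ℝ) 1, ℂ) :=
  ⟨fun t => Complex.exp (2 * Real.pi * Complex.I * ((t : ℝ) : ℂ)), by fun_prop⟩

/-- The matrix `P(t) = [[1, e^{2πit}], [e^{-2πit}, 1]] ∈ M_2(C([0,1]))`. -/
noncomputable def Pmat : Matrix (Fin 2) (Fin 2) C(Set.Icc (0:ℝ) 1, ℂ) :=
  !![1, expMap; star expMap, 1]

/-! Write `z = e^{2πit}` and let `ζ` be a primitive `N`-th root of unity. For the Fejér-type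
weights `p_k = c₁ |∑_{m ≤ d} (ζ^k z̄)^m|² + c₂ ≥ 0`, orthogonality of the powers of `ζ` gives
`∑ p_k = N c₁ (d + 1) + N c₂` and `∑ ζ^k p_k = N c₁ d z` as soon as `N > d + 1`. Choosing
`d ≥ 1/r` and the constants accordingly, `r e₂ + P = ∑ [[1, ζ^k], [ζ̄^k, 1]] ⊗ p_k` with positive
semidefinite coefficients.

Conversely, `(1, -z̄)` spans the kernel of `P(t)`. If `P = ∑ aᵢ ⊗ vᵢ` with `aᵢ ≥ 0`, `vᵢ ≥ 0`, then
`(1, -z̄(t))` lies in the kernel of every `aᵢ` with `vᵢ(t) ≠ 0`; since `z` is not locally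
constant, a nonzero `vᵢ` produces two independent kernel vectors of `aᵢ`, so every term vanishes,
which is absurd as `P ≠ 0`. -/

open Filter Topology ComplexConjugate Matrix

lemma posSemidef_of_norm_eq_one {w : ℂ} (hw : ‖w‖ = 1) : (!![1, w; star w, 1]).PosSemidef := by
  convert posSemidef_vecMulVec_self_star ![1, star w] using 1
  ext i j
  fin_cases i <;> fin_cases j <;>
    simp [vecMulVec_apply, ← Complex.normSq_eq_conj_mul_self, Complex.normSq_eq_norm_sq, hw]

lemma Matrix.eq_zero_of_mulVec_cons_one_eq_zero {K : Type*} [Field K]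
    {A : Matrix (Fin 2) (Fin 2) K} {w w' : K} (hw : w ≠ w') (h : A *ᵥ ![1, w] = 0)
    (h' : A *ᵥ ![1, w'] = 0) : A = 0 := by
  ext i j
  have e := congrFun h i
  have e' := congrFun h' i
  simp [mulVec, dotProduct] at e e'
  have h1 : A i 1 = 0 := by
    have : A i 1 * (w - w') = 0 := by linear_combination e - e'
    simpa [sub_eq_zero, hw] using this
  fin_cases j
  · simpa [h1] using e
  · exact h1

lemma IsPrimitiveRoot.geom_sum_pow_mul_inv_pow {K : Type*} [Field K] {ζ : K} {N p q : ℕ}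
    (hζ : IsPrimitiveRoot ζ N) (hp : p < N) (hq : q < N) :
    ∑ k ∈ range N, (ζ ^ p * (ζ ^ q)⁻¹) ^ k = if p = q then (N : K) else 0 := by
  have hζ0 : ζ ≠ 0 := hζ.ne_zero (by omega)
  split_ifs with hpq
  · simp [hpq, hζ0]
  · have hρ : ζ ^ p * (ζ ^ q)⁻¹ ≠ 1 := fun h =>
      hpq (hζ.pow_inj hp hq (mul_inv_eq_one₀ (pow_ne_zero _ hζ0) |>.mp h))
    rw [geom_sum_eq hρ, mul_pow, inv_pow, ← pow_mul, ← pow_mul, mul_comm p, mul_comm q, pow_mul,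
      pow_mul, hζ.pow_eq_one]
    simp

def fejerSum (d : ℕ) (w : ℂ) : ℂ := ∑ m ∈ range (d + 1), w ^ m

lemma sum_pow_mul_norm_fejerSum_sq {ζ : ℂ} {N a d : ℕ} (hζ : IsPrimitiveRoot ζ N)
    (had : a + d < N) {z : ℂ} (hz : ‖z‖ = 1) :
    ∑ k ∈ range N, ζ ^ (a * k) * (‖fejerSum d (ζ ^ k * conj z)‖ : ℂ) ^ 2
      = N * (d + 1 - a : ℕ) * z ^ a := by
  have hζ_conj : conj ζ = ζ⁻¹ := (Complex.inv_eq_conj (hζ.norm'_eq_one (by omega))).symm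
  have hz_conj : z * conj z = 1 := by rw [Complex.mul_conj', hz]; norm_num
  calc ∑ k ∈ range N, ζ ^ (a * k) * (‖fejerSum d (ζ ^ k * conj z)‖ : ℂ) ^ 2
      = ∑ k ∈ range N, ∑ m' ∈ range (d + 1), ∑ m ∈ range (d + 1),
          z ^ m' * conj z ^ m * (ζ ^ (a + m) * (ζ ^ m')⁻¹) ^ k := by
        refine sum_congr rfl fun k _ => ?_
        rw [← Complex.conj_mul', fejerSum, map_sum, sum_mul_sum, mul_sum]
        refine sum_congr rfl fun m' _ => ?_
        rw [mul_sum]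
        refine sum_congr rfl fun m _ => ?_
        simp only [map_pow, map_mul, hζ_conj, Complex.conj_conj]
        ring
    _ = ∑ m' ∈ range (d + 1), ∑ m ∈ range (d + 1),
          z ^ m' * conj z ^ m * ∑ k ∈ range N, (ζ ^ (a + m) * (ζ ^ m')⁻¹) ^ k := by
        simp_rw [mul_sum]
        rw [sum_comm]
        exact sum_congr rfl fun _ _ => sum_comm
    _ = ∑ m ∈ range (d + 1), if a + m < d + 1 then (N : ℂ) * z ^ a else 0 := by
        rw [sum_comm]
        refine sum_congr rfl fun m hm => ?_
        rw [mem_range] at hm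
        rw [sum_congr rfl fun m' hm' => by
          rw [hζ.geom_sum_pow_mul_inv_pow (by omega) (by rw [mem_range] at hm'; omega)]]
        simp only [mul_ite, mul_zero, sum_ite_eq, mem_range]
        refine if_congr Iff.rfl ?_ rfl
        have hzm : (z * conj z) ^ m = 1 := by rw [hz_conj, one_pow]
        linear_combination (N * z ^ a) * hzm
    _ = ∑ m ∈ range (d + 1 - a), (N : ℂ) * z ^ a := by
        rw [← sum_filter]
        congr 1
        ext m
        simp only [mem_filter, mem_range]
        omega
    _ = N * (d + 1 - a : ℕ) * z ^ a := by
        rw [sum_const, card_range, nsmul_eq_mul]; ring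

lemma mem_Dmax_of_norm_eq_one {V : Type*} [AddCommGroup V] [Module ℂ V] {pos : Set V} {N : ℕ}
    {w : ℕ → ℂ} (hw : ∀ k, ‖w k‖ = 1) {p : ℕ → V} (hp : ∀ k < N, p k ∈ pos) :
    !![∑ k ∈ range N, p k, ∑ k ∈ range N, w k • p k;
       ∑ k ∈ range N, star (w k) • p k, ∑ k ∈ range N, p k] ∈ Dmax pos 2 := by
  refine ⟨N, fun k => !![1, w k; star (w k), 1], fun k => p k,
    fun k => posSemidef_of_norm_eq_one (hw k), fun k => hp k k.2, ?_⟩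
  ext i j
  fin_cases i <;> fin_cases j <;>
    simp [Matrix.sum_apply, eTensor, Fin.sum_univ_eq_sum_range (fun k => w k • p k),
      Fin.sum_univ_eq_sum_range (fun k => conj (w k) • p k), Fin.sum_univ_eq_sum_range p]

lemma map_eval_sum_eTensor {X : Type*} [TopologicalSpace X] {k n : ℕ}
    (a : Fin k → Matrix (Fin n) (Fin n) ℂ) (v : Fin k → C(X, ℂ)) (x : X) :
    (∑ i, eTensor (a i) (v i)).map (· x) = ∑ i, v i x • a i := by
  ext p q
  simp [Matrix.sum_apply, eTensor, mul_comm]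

def posCont (X : Type*) [TopologicalSpace X] : Set C(X, ℂ) := {f | ∀ x, 0 ≤ f x}

theorem smul_eMat_add_mem_Dmax_of_norm_eq_one {X : Type*} [TopologicalSpace X] {u : C(X, ℂ)}
    (hu : ∀ x, ‖u x‖ = 1) {r : ℝ} (hr : 0 < r) :
    (r : ℂ) • eMat (1 : C(X, ℂ)) 2 + !![1, u; star u, 1] ∈ Dmax (posCont X) 2 := by
  obtain ⟨n, hn⟩ := exists_nat_one_div_lt hr
  set d := n + 1
  have hdr : 1 / (d : ℝ) < r := by simpa [d] using hn
  set N := d + 2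
  set ζ := Complex.exp (2 * Real.pi * Complex.I / N)
  have hζ : IsPrimitiveRoot ζ N := Complex.isPrimitiveRoot_exp N (by omega)
  have hd0 : (d : ℝ) ≠ 0 := Nat.cast_ne_zero.2 (by omega)
  have hN0 : (N : ℝ) ≠ 0 := Nat.cast_ne_zero.2 (by omega)
  -- `c₁ N d = 1` makes the off-diagonal sum `u`; `c₂` tops the diagonal up to `r + 1`.
  set c₁ : ℝ := 1 / (N * d)
  set c₂ : ℝ := (r - 1 / d) / N
  have hc₂ : 0 ≤ c₂ := div_nonneg (by linarith) (Nat.cast_nonneg N)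
  let p : ℕ → C(X, ℂ) := fun k =>
    ⟨fun x => ((c₁ * ‖fejerSum d (ζ ^ k * conj (u x))‖ ^ 2 + c₂ : ℝ) : ℂ), by
      unfold fejerSum; fun_prop⟩
  have hp_pos : ∀ k, p k ∈ posCont X := fun k x => Complex.zero_le_real.2 (by positivity)
  have hsum : ∀ x, ∑ k ∈ range N, p k x = r + 1 := fun x => by
    have h := sum_pow_mul_norm_fejerSum_sq hζ (a := 0) (d := d) (by omega) (hu x)
    simp only [zero_mul, pow_zero, one_mul, Nat.sub_zero, mul_one] at h
    have hc : c₁ * (N * (d + 1)) + N * c₂ = r + 1 := by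
      simp only [c₁, c₂]; field_simp; ring
    simp only [p, ContinuousMap.coe_mk]
    push_cast
    rw [sum_add_distrib, ← mul_sum, h, sum_const, card_range, nsmul_eq_mul]
    exact_mod_cast hc
  have hsum_mul : ∀ x, ∑ k ∈ range N, ζ ^ k * p k x = u x := fun x => by
    have h := sum_pow_mul_norm_fejerSum_sq hζ (a := 1) (d := d) (by omega) (hu x)
    simp only [one_mul, pow_one, Nat.add_sub_cancel] at h
    have hc : (c₁ : ℂ) * (N * d) = 1 := by
      exact_mod_cast (show c₁ * (N * d) = 1 by simp only [c₁]; field_simp)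
    simp only [p, ContinuousMap.coe_mk]
    push_cast
    simp_rw [mul_add, ← mul_assoc, mul_comm _ (c₁ : ℂ), mul_assoc]
    rw [sum_add_distrib, ← mul_sum, h, ← sum_mul, hζ.geom_sum_eq_zero (by omega), zero_mul,
      add_zero]
    linear_combination u x * hc
  convert mem_Dmax_of_norm_eq_one (pos := posCont X) (N := N) (w := fun k => ζ ^ k)
    (fun k => by simp [hζ.norm'_eq_one]) (fun k _ => hp_pos k) using 1
  ext i j x
  have hp_real : ∀ k, conj (p k x) = p k x := fun k => Complex.conj_ofReal _
  fin_cases i <;> fin_cases j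
  · simp [eMat, hsum]
  · simp [eMat, hsum_mul]
  · simp [eMat, ← hsum_mul, hp_real]
  · simp [eMat, hsum]

theorem notMem_Dmax_of_frequently_ne {X : Type*} [TopologicalSpace X] [Nonempty X] {u : C(X, ℂ)}
    (hu : ∀ x, ‖u x‖ = 1) (hu_loc : ∀ x, ∃ᶠ y in 𝓝 x, u y ≠ u x) :
    !![1, u; star u, 1] ∉ Dmax (posCont X) 2 := by
  rintro ⟨k, a, v, ha, hv, hM⟩
  -- `ξ x` is killed by the value of the matrix at `x`.
  set ξ : X → Fin 2 → ℂ := fun x => ![1, -conj (u x)]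
  have hker : ∀ x, ∑ i, v i x * (star (ξ x) ⬝ᵥ a i *ᵥ ξ x) = 0 := fun x => by
    have hux : u x * conj (u x) = 1 := by rw [Complex.mul_conj', hu]; norm_num
    have h := congrArg
      (fun M : Matrix (Fin 2) (Fin 2) C(X, ℂ) => star (ξ x) ⬝ᵥ M.map (· x) *ᵥ ξ x) hM
    simp only [map_eval_sum_eTensor, sum_mulVec, dotProduct_sum, smul_mulVec, dotProduct_smul,
      smul_eq_mul] at h
    rw [← h]
    simp [ξ, mulVec, dotProduct, Fin.sum_univ_two, hux]
  have hkernel : ∀ x i, v i x ≠ 0 → a i *ᵥ ξ x = 0 := fun x i hvi => by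
    have hterm := (sum_eq_zero_iff_of_nonneg fun j _ =>
      mul_nonneg (hv j x) ((ha j).dotProduct_mulVec_nonneg (ξ x))).1 (hker x) i (mem_univ i)
    exact ((ha i).dotProduct_mulVec_zero_iff _).1 ((mul_eq_zero.1 hterm).resolve_left hvi)
  have hzero : ∀ i, eTensor (a i) (v i) = 0 := fun i => by
    by_cases hvi : v i = 0
    · ext p q x
      simp [hvi, eTensor]
    obtain ⟨x₀, hx₀⟩ := DFunLike.ne_iff.1 hvi
    obtain ⟨x₁, hx₁, hux⟩ :=
      (((v i).continuous.continuousAt.eventually_ne hx₀).and_frequently (hu_loc x₀)).exists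
    have hai : a i = 0 :=
      Matrix.eq_zero_of_mulVec_cons_one_eq_zero
        (neg_injective.ne ((starRingEnd ℂ).injective.ne hux)) (hkernel x₁ i hx₁) (hkernel x₀ i hx₀)
    ext p q x
    simp [hai, eTensor]
  have h := congrArg (fun M : Matrix (Fin 2) (Fin 2) C(X, ℂ) => M 0 0 (Classical.arbitrary X)) hM
  simp [hzero] at h

lemma norm_expMap (t : Set.Icc (0:ℝ) 1) : ‖expMap t‖ = 1 := by
  simpa [expMap, mul_comm _ Complex.I, mul_assoc] using
    Complex.norm_exp_ofReal_mul_I (2 * Real.pi * t)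

lemma eq_of_expMap_eq {s t : Set.Icc (0:ℝ) 1} (h : expMap s = expMap t) (hd : dist s t < 1) :
    s = t := by
  obtain ⟨n, hn⟩ := Complex.exp_eq_exp_iff_exists_int.1 h
  have hst : (s : ℝ) = t + n := by
    have h2πI : (2 * Real.pi * Complex.I : ℂ) ≠ 0 := by simp [Real.pi_ne_zero, Complex.I_ne_zero]
    have : ((s : ℝ) : ℂ) = ((t + n : ℝ) : ℂ) :=
      mul_left_cancel₀ h2πI (by push_cast; linear_combination hn)
    exact_mod_cast this
  have hn0 : n = 0 := by
    rw [Subtype.dist_eq, Real.dist_eq, hst, add_sub_cancel_left, ← Int.cast_abs] at hd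
    exact Int.abs_lt_one_iff.1 (by exact_mod_cast hd)
  exact Subtype.ext (by simpa [hn0] using hst)

lemma expMap_frequently_ne (t₀ : Set.Icc (0:ℝ) 1) : ∃ᶠ t in 𝓝 t₀, expMap t ≠ expMap t₀ := by
  have hnear : ∀ᶠ t in 𝓝[≠] t₀, dist t t₀ < 1 ∧ t ≠ t₀ :=
    (eventually_nhdsWithin_of_eventually_nhds (Metric.ball_mem_nhds t₀ one_pos)).and
      self_mem_nhdsWithin
  exact (hnear.frequently.filter_mono nhdsWithin_le_nhds).mono fun t ⟨hd, hne⟩ h =>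
    hne (eq_of_expMap_eq h hd)

/-- `r e_2 + P ∈ D_2^max(C([0,1]))` for every `r > 0`; consequently
the unit is not an Archimedean matrix order unit for `D^max(C([0,1]))`. -/
theorem smul_unit_add_Pmat_mem_Dmax_and_not_arch :
    (∀ r : ℝ, 0 < r →
      (r : ℂ) • eMat (1 : C(Set.Icc (0:ℝ) 1, ℂ)) 2 + Pmat ∈ Dmax posC01 2) ∧
    ¬ (∀ M : Matrix (Fin 2) (Fin 2) C(Set.Icc (0:ℝ) 1, ℂ),
        (∀ r : ℝ, 0 < r → (r : ℂ) • eMat (1 : C(Set.Icc (0:ℝ) 1, ℂ)) 2 + M ∈ Dmax posC01 2) →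
        M ∈ Dmax posC01 2) := by
  have hP : ∀ r : ℝ, 0 < r → (r : ℂ) • eMat 1 2 + Pmat ∈ Dmax posC01 2 :=
    fun _ hr => smul_eMat_add_mem_Dmax_of_norm_eq_one norm_expMap hr
  exact ⟨hP, fun h => notMem_Dmax_of_frequently_ne norm_expMap expMap_frequently_ne (h Pmat hP)⟩
end

section
/- Let (V,{C_n},e) be a matrix ordered *-vector space with matrix order unit such that (V, C_1, e) is an AOU space. Define C_n^Arch := {A ∈ M_n(V) : r e_n + A ∈ C_n for all r > 0}. Then (V, {C_n^Arch}, e) is an operator system (the Archimedeanization), with C_1^Arch = C_1. -/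
open scoped ComplexOrder
open Finset

/-! Every axiom of an operator system passes from `C_n` to `C_n^Arch` by absorbing small
multiples of `e_n`; for compatibility, `X* e_n X ≤ t e_m` for some `t` because `e` is a matrix
order unit. At level one the Archimedean property of the AOU space gives `C_1^Arch = C_1`, and
properness at level `n` follows from properness at level one, since the compressions `λ* A λ`
of `A` determine `A` by polarization. -/

section Archimedeanization
variable {W : Type*} [AddCommGroup W] [Module ℂ W]

def archimedeanization (S : Set W) (E : W) : Set W :=
  {A | ∀ r : ℝ, 0 < r → (r : ℂ) • E + A ∈ S}

variable {S : Set W} {E A B : W}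

lemma add_mem_archimedeanization (hadd : ∀ a ∈ S, ∀ b ∈ S, a + b ∈ S)
    (hA : A ∈ archimedeanization S E) (hB : B ∈ archimedeanization S E) :
    A + B ∈ archimedeanization S E := by
  intro r hr
  have hsplit : (r : ℂ) • E + (A + B) =
      (((r / 2 : ℝ) : ℂ) • E + A) + (((r / 2 : ℝ) : ℂ) • E + B) := by
    rw [add_add_add_comm, ← add_smul, ← Complex.ofReal_add, add_halves]
  rw [hsplit]
  exact hadd _ (hA _ (half_pos hr)) _ (hB _ (half_pos hr))

lemma smul_mem_archimedeanization (hsmul : ∀ r : ℝ, 0 ≤ r → ∀ a ∈ S, (r : ℂ) • a ∈ S)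
    (hE : E ∈ S) {r : ℝ} (hr : 0 ≤ r) (hA : A ∈ archimedeanization S E) :
    (r : ℂ) • A ∈ archimedeanization S E := by
  intro s hs
  rcases hr.eq_or_lt with rfl | hr
  · simpa using hsmul s hs.le E hE
  · have h := hsmul r hr.le _ (hA (s / r) (div_pos hs hr))
    rwa [smul_add, smul_smul, ← Complex.ofReal_mul, mul_div_cancel₀ s hr.ne'] at h

lemma subset_archimedeanization (hadd : ∀ a ∈ S, ∀ b ∈ S, a + b ∈ S)
    (hsmul : ∀ r : ℝ, 0 ≤ r → ∀ a ∈ S, (r : ℂ) • a ∈ S) (hE : E ∈ S) :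
    S ⊆ archimedeanization S E :=
  fun _ hA r hr => hadd _ (hsmul r hr.le E hE) _ hA

lemma mem_archimedeanization_of_forall_smul_add
    (hA : ∀ r : ℝ, 0 < r → (r : ℂ) • E + A ∈ archimedeanization S E) :
    A ∈ archimedeanization S E := by
  intro r hr
  have h := hA (r / 2) (half_pos hr) (r / 2) (half_pos hr)
  rwa [← add_assoc, ← add_smul, ← Complex.ofReal_add, add_halves] at h

lemma star_eq_of_mem_archimedeanization [StarAddMonoid W] (hS : ∀ a ∈ S, star a = a)
    (hE : star E = E) (hA : A ∈ archimedeanization S E) : star A = A := by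
  have h := hS _ (hA 1 one_pos)
  rw [Complex.ofReal_one, one_smul, star_add, hE] at h
  exact add_left_cancel h

end Archimedeanization

section MatrixSums
variable {V ι : Type*} [AddCommGroup V] [Module ℂ V] [Fintype ι] [DecidableEq ι]

lemma sum_sum_single_smul (M : Matrix ι ι V) (i : ι) :
    ∑ p, ∑ q, (star ((Pi.single i 1 : ι → ℂ) p) * (Pi.single i 1 : ι → ℂ) q) • M p q = M i i := by
  simp [Pi.single_apply]

lemma sum_sum_pair_smul (M : Matrix ι ι V) {i j : ι} (hij : i ≠ j) (c : ℂ) :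
    ∑ p, ∑ q, (star ((Pi.single i 1 + Pi.single j c : ι → ℂ) p) *
        (Pi.single i 1 + Pi.single j c : ι → ℂ) q) • M p q =
      M i i + c • M i j + star c • M j i + (star c * c) • M j j := by
  have hsupp : ∀ p, p ≠ i ∧ p ≠ j → (Pi.single i 1 + Pi.single j c : ι → ℂ) p = 0 := by
    rintro p ⟨hi, hj⟩; simp [hi, hj]
  rw [Fintype.sum_eq_add i j hij fun p hp => by simp [hsupp p hp],
    Fintype.sum_eq_add i j hij fun q hq => by simp [hsupp q hq],
    Fintype.sum_eq_add i j hij fun q hq => by simp [hsupp q hq]]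
  simp only [Pi.add_apply, Pi.single_eq_same, Pi.single_eq_of_ne, hij, hij.symm, ne_eq,
    not_false_eq_true, add_zero, zero_add, star_one, mul_one, one_mul, one_smul]
  abel

lemma eq_zero_of_forall_sum_sum_smul_eq_zero (M : Matrix ι ι V)
    (h : ∀ f : ι → ℂ, ∑ p, ∑ q, (star (f p) * f q) • M p q = 0) : M = 0 := by
  have hdiag : ∀ i, M i i = 0 := fun i => by
    rw [← sum_sum_single_smul M i]; exact h _
  ext i j
  rcases eq_or_ne i j with rfl | hij
  · exact hdiag i
  have hpair := fun c => (sum_sum_pair_smul M hij c).symm.trans (h _)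
  have h1 := hpair 1
  have hI := hpair Complex.I
  simp only [hdiag, smul_zero, add_zero, zero_add, one_smul, star_one] at h1 hI
  have hsymm : M i j = M j i := by
    rw [← sub_eq_zero]
    apply smul_right_injective V Complex.I_ne_zero
    simpa [smul_sub, Complex.star_def, sub_eq_add_neg] using hI
  rw [hsymm, ← two_smul ℂ] at h1
  rw [hsymm]
  exact (smul_eq_zero.1 h1).resolve_left two_ne_zero

end MatrixSums

lemma Matrix.of_apply_zero_zero_fin_one {α : Type*} (A : Matrix (Fin 1) (Fin 1) α) :
    (Matrix.of fun _ _ => A 0 0) = A := by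
  ext i j
  simp [Subsingleton.elim i 0, Subsingleton.elim j 0]

lemma star_eMat {V : Type*} [AddCommGroup V] [StarAddMonoid V] {e : V} (he : star e = e)
    (n : ℕ) : star (eMat e n) = eMat e n := by
  ext i j
  by_cases h : i = j
  · simp [eMat, Matrix.star_apply, h, he]
  · simp [eMat, Matrix.star_apply, h, Ne.symm h]

lemma mem_groundPos_iff {V : Type*} {C : ∀ n : ℕ, Set (Matrix (Fin n) (Fin n) V)}
    {A : Matrix (Fin 1) (Fin 1) V} : A 0 0 ∈ groundPos C ↔ A ∈ C 1 :=
  Iff.of_eq (congrArg (· ∈ C 1) (Matrix.of_apply_zero_zero_fin_one A))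

section MatrixOrdering
variable {V : Type*} [AddCommGroup V] [Module ℂ V]

lemma mconj_add {n m : ℕ} (X : Matrix (Fin n) (Fin m) ℂ) (A B : Matrix (Fin n) (Fin n) V) :
    mconj X (A + B) = mconj X A + mconj X B := by
  ext i j
  simp [mconj, smul_add, Finset.sum_add_distrib]

lemma mconj_smul {n m : ℕ} (X : Matrix (Fin n) (Fin m) ℂ) (c : ℂ)
    (A : Matrix (Fin n) (Fin n) V) : mconj X (c • A) = c • mconj X A := by
  ext i j
  simp [mconj, Finset.smul_sum, smul_comm c]

lemma mconj_neg {n m : ℕ} (X : Matrix (Fin n) (Fin m) ℂ) (A : Matrix (Fin n) (Fin n) V) :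
    mconj X (-A) = -mconj X A := by
  simpa using mconj_smul X (-1) A

lemma mconj_col_apply {n : ℕ} (f : Fin n → ℂ) (A : Matrix (Fin n) (Fin n) V) :
    mconj (Matrix.of fun k (_ : Fin 1) => f k) A 0 0 = ∑ p, ∑ q, (star (f p) * f q) • A p q :=
  rfl

variable [StarAddMonoid V] {C : ∀ n : ℕ, Set (Matrix (Fin n) (Fin n) V)} {e : V}

lemma eMat_mem_of_isMatrixOrderUnit (hC : IsMatrixOrdering C) (hU : IsMatrixOrderUnit C e)
    (n : ℕ) : eMat e n ∈ C n := by
  obtain ⟨r, hr, hrE⟩ := hU.2 n 0 (star_zero _)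
  have h := hC.2.1 n r⁻¹ (inv_nonneg.2 hr.le) _ hrE
  rwa [sub_zero, smul_smul, ← Complex.ofReal_mul, inv_mul_cancel₀ hr.ne', Complex.ofReal_one,
    one_smul] at h

lemma subset_archimedeanization_eMat (hC : IsMatrixOrdering C) (hU : IsMatrixOrderUnit C e)
    (n : ℕ) : C n ⊆ archimedeanization (C n) (eMat e n) :=
  subset_archimedeanization (hC.2.2.1 n) (hC.2.1 n) (eMat_mem_of_isMatrixOrderUnit hC hU n)

lemma mconj_mem_archimedeanization (hC : IsMatrixOrdering C) (hU : IsMatrixOrderUnit C e)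
    {n m : ℕ} (X : Matrix (Fin n) (Fin m) ℂ) {A : Matrix (Fin n) (Fin n) V}
    (hA : A ∈ archimedeanization (C n) (eMat e n)) :
    mconj X A ∈ archimedeanization (C m) (eMat e m) := by
  have hE := eMat_mem_of_isMatrixOrderUnit hC hU n
  obtain ⟨hher, hsmul, hadd, -, hcomp⟩ := hC
  have hXE : mconj X (eMat e n) ∈ C m := hcomp n m X _ hE
  obtain ⟨t, ht, htE⟩ := hU.2 m _ (hher m _ hXE)
  intro r hr
  have hrt : 0 < r / t := div_pos hr ht
  have h := hadd m _ (hsmul m _ hrt.le _ htE) _ (hcomp n m X _ (hA _ hrt))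
  rwa [mconj_add, mconj_smul, smul_sub, smul_smul, ← Complex.ofReal_mul, div_mul_cancel₀ r ht.ne',
    ← add_assoc, sub_add_cancel] at h

lemma archimedeanization_one_eq (hC : IsMatrixOrdering C) (hU : IsMatrixOrderUnit C e)
    (hAOU : IsAOU (groundPos C) e) : archimedeanization (C 1) (eMat e 1) = C 1 := by
  refine Set.Subset.antisymm (fun A hA => ?_) (subset_archimedeanization_eMat hC hU 1)
  rw [← mem_groundPos_iff]
  refine hAOU.2.2.2 _ fun r hr => ?_
  have h := mem_groundPos_iff.2 (hA r hr)
  simpa [eMat] using h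

lemma eq_zero_of_mem_archimedeanization_of_neg_mem (hC : IsMatrixOrdering C)
    (hU : IsMatrixOrderUnit C e) (hAOU : IsAOU (groundPos C) e) {n : ℕ}
    {A : Matrix (Fin n) (Fin n) V} (hA : A ∈ archimedeanization (C n) (eMat e n))
    (hA' : -A ∈ archimedeanization (C n) (eMat e n)) : A = 0 := by
  refine eq_zero_of_forall_sum_sum_smul_eq_zero A fun f => ?_
  set X : Matrix (Fin n) (Fin 1) ℂ := Matrix.of fun k _ => f k
  have hpos : mconj X A ∈ C 1 := by
    rw [← archimedeanization_one_eq hC hU hAOU]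
    exact mconj_mem_archimedeanization hC hU X hA
  have hneg : -mconj X A ∈ C 1 := by
    rw [← archimedeanization_one_eq hC hU hAOU, ← mconj_neg]
    exact mconj_mem_archimedeanization hC hU X hA'
  rw [← mconj_col_apply, hC.2.2.2.1 1 _ hpos hneg, Matrix.zero_apply]

end MatrixOrdering

theorem archimedeanization_isOperatorSystem_general
    {V : Type*} [AddCommGroup V] [Module ℂ V] [StarAddMonoid V]
    (C : ∀ n : ℕ, Set (Matrix (Fin n) (Fin n) V)) (e : V)
    (hC : IsMatrixOrdering C) (hU : IsMatrixOrderUnit C e)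
    (hAOU : IsAOU (groundPos C) e) :
    IsOperatorSystem
      (fun n => {A : Matrix (Fin n) (Fin n) V |
        ∀ r : ℝ, 0 < r → (r : ℂ) • eMat e n + A ∈ C n}) e ∧
    {A : Matrix (Fin 1) (Fin 1) V | ∀ r : ℝ, 0 < r → (r : ℂ) • eMat e 1 + A ∈ C 1}
      = C 1 := by
  have hE := eMat_mem_of_isMatrixOrderUnit hC hU
  have hordering : IsMatrixOrdering fun n => archimedeanization (C n) (eMat e n) :=
    ⟨fun n _ hA => star_eq_of_mem_archimedeanization (hC.1 n) (star_eMat hU.1 n) hA,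
      fun n _ hr _ hA => smul_mem_archimedeanization (hC.2.1 n) (hE n) hr hA,
      fun n _ hA _ hB => add_mem_archimedeanization (hC.2.2.1 n) hA hB,
      fun _ _ hA hA' => eq_zero_of_mem_archimedeanization_of_neg_mem hC hU hAOU hA hA',
      fun _ _ X _ hA => mconj_mem_archimedeanization hC hU X hA⟩
  have hunit : IsMatrixOrderUnit (fun n => archimedeanization (C n) (eMat e n)) e :=
    ⟨hU.1, fun n M hM => (hU.2 n M hM).imp fun _ ⟨hr, hrM⟩ =>
      ⟨hr, subset_archimedeanization_eMat hC hU n hrM⟩⟩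
  exact ⟨⟨hordering, hunit, fun _ _ => mem_archimedeanization_of_forall_smul_add⟩,
    archimedeanization_one_eq hC hU hAOU⟩

/-- Archimedeanization: if `(V, C_1, e)` is an AOU space, then the
family `C_n^Arch = {A : r e_n + A ∈ C_n for all r > 0}` makes `(V, {C_n^Arch}, e)` an
operator system, and `C_1^Arch = C_1`. -/
theorem archimedeanization_isOperatorSystem
    {V : Type*} [AddCommGroup V] [Module ℂ V] [StarAddMonoid V] [StarModule ℂ V]
    (C : ∀ n : ℕ, Set (Matrix (Fin n) (Fin n) V)) (e : V)
    (hC : IsMatrixOrdering C) (hU : IsMatrixOrderUnit C e)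
    (hAOU : IsAOU (groundPos C) e) :
    IsOperatorSystem
      (fun n => {A : Matrix (Fin n) (Fin n) V |
        ∀ r : ℝ, 0 < r → (r : ℂ) • eMat e n + A ∈ C n}) e ∧
    {A : Matrix (Fin 1) (Fin 1) V | ∀ r : ℝ, 0 < r → (r : ℂ) • eMat e 1 + A ∈ C 1}
      = C 1 :=
  archimedeanization_isOperatorSystem_general C e hC hU hAOU
end
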